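/- Let 𝔣 be continuous of bounded variation with ∫_𝕋 𝔣(x) dx = 0 and 𝔭(x) = e^{𝔣(x)}/(1+e^{𝔣(x)}). Fix integers q ≥ 2 and n₀ ≥ 0, let I_k = [qk, q(k+1)) ∩ ℤ for k ∈ ℤ, and let τ_k be the moment of the first visit of (ξ_n) to I_k. If the triple (𝔭, α, x) satisfies ℙ_x(max_{j≤n} ξ_j = ξ_n) → 0 and ℙ_x(min_{j≤n} ξ_j = ξ_n) → 0 as n → ∞, then Σ_{k∈ℤ} ℙ_x(τ_k > n − n₀, ξ_n ∈ I_k) → 0 as n → ∞. -/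
import Mathlib


open MeasureTheory Filter Finset

noncomputable section

attribute [local instance] Classical.propDecidable

/-- The point `x + j·α` on the circle `𝕋 = ℝ/ℤ`. -/
def pt (α : ℝ) (x : UnitAddCircle) (j : ℤ) : UnitAddCircle :=
  x + (((j : ℝ) * α : ℝ) : UnitAddCircle)

/-- One-step transition probability of the random walk on `ℤ` in the quasi-periodic
environment `(𝔭, α, x)`: from `j` it jumps to `j+1` with probability `𝔭(x+jα)` and to
`j-1` with probability `𝔮(x+jα) = 1-𝔭(x+jα)`. -/
def stepProb (𝔭 : UnitAddCircle → ℝ) (α : ℝ) (x : UnitAddCircle) (j j' : ℤ) : ℝ :=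
  if j' = j + 1 then 𝔭 (pt α x j) else if j' = j - 1 then 1 - 𝔭 (pt α x j) else 0

/-- `ξ` is (a version of) the random walk on `ℤ` in the quasi-periodic environment
`(𝔭, α, x)` started at `start`, defined on the probability space `(Ω, ℙ)`; this is
expressed through its finite-dimensional distributions. -/
def IsQPWalk (𝔭 : UnitAddCircle → ℝ) (α : ℝ) (x : UnitAddCircle) (start : ℤ)
    {Ω : Type} [MeasurableSpace Ω] (ℙ : Measure Ω) (ξ : ℕ → Ω → ℤ) : Prop :=
  IsProbabilityMeasure ℙ ∧ (∀ n, Measurable (ξ n)) ∧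
  ∀ (n : ℕ) (k : ℕ → ℤ),
    ℙ {ω | ∀ i ≤ n, ξ i ω = k i} =
      ENNReal.ofReal ((if k 0 = start then (1 : ℝ) else 0) *
        ∏ i ∈ Finset.range n, stepProb 𝔭 α x (k i) (k (i + 1)))

/-- `𝔣` is continuous, of bounded variation, with `∫_𝕋 𝔣(z) dz = 0`. -/
def ZeroMeanBV (𝔣 : UnitAddCircle → ℝ) : Prop :=
  Continuous 𝔣 ∧ BoundedVariationOn (fun t : ℝ => 𝔣 (t : UnitAddCircle)) (Set.Icc 0 1) ∧
    ∫ z : UnitAddCircle, 𝔣 z = 0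

/-- The function `𝔭 = e^𝔣/(1+e^𝔣)` associated to `𝔣`. -/
def pOf (𝔣 : UnitAddCircle → ℝ) : UnitAddCircle → ℝ :=
  fun z => Real.exp (𝔣 z) / (1 + Real.exp (𝔣 z))

/-- Condition (1.6): `ℙ_x(max_{j≤n} ξ_j = ξ_n) → 0` and `ℙ_x(min_{j≤n} ξ_j = ξ_n) → 0`
as `n → ∞`. -/
def MaxMinCond {Ω : Type} [MeasurableSpace Ω] (ℙ : Measure Ω) (ξ : ℕ → Ω → ℤ) : Prop :=
  Tendsto (fun n => (ℙ {ω | ∀ j ≤ n, ξ j ω ≤ ξ n ω}).toReal) atTop (nhds 0) ∧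
    Tendsto (fun n => (ℙ {ω | ∀ j ≤ n, ξ n ω ≤ ξ j ω}).toReal) atTop (nhds 0)

section Aux

variable {Ω : Type} [MeasurableSpace Ω] {ℙ : Measure Ω} {ξ : ℕ → Ω → ℤ}
variable {𝔭 : UnitAddCircle → ℝ} {α : ℝ} {x : UnitAddCircle}

/-- Almost surely the walk starts at 0. -/
lemma null_start (hw : IsQPWalk 𝔭 α x 0 ℙ ξ) : ℙ {ω | ξ 0 ω ≠ 0} = 0 := by
  have hcover : {ω | ξ 0 ω ≠ 0} ⊆ ⋃ a : ℤ, {ω | a ≠ 0 ∧ ∀ i ≤ 0, ξ i ω = a} := by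
    intro ω hω
    exact Set.mem_iUnion.mpr ⟨ξ 0 ω, hω, fun i hi => by rw [Nat.le_zero.mp hi]⟩
  refine measure_mono_null hcover (measure_iUnion_null fun a => ?_)
  by_cases ha : a = 0
  · simp [ha]
  · have h : ℙ {ω | ∀ i ≤ 0, ξ i ω = (fun _ => a) i} = 0 := by
      rw [hw.2.2 0 (fun _ => a)]
      simp [ha]
    exact measure_mono_null (fun ω hω => fun i hi => hω.2 i hi) h

/-- Almost surely each step is ±1. -/
lemma null_badstep (hw : IsQPWalk 𝔭 α x 0 ℙ ξ) (j : ℕ) :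
    ℙ {ω | ¬(ξ (j + 1) ω = ξ j ω + 1 ∨ ξ (j + 1) ω = ξ j ω - 1)} = 0 := by
  set E := {ω | ¬(ξ (j + 1) ω = ξ j ω + 1 ∨ ξ (j + 1) ω = ξ j ω - 1)} with hE
  have hcover : E ⊆ ⋃ c : Fin (j + 2) → ℤ,
      (E ∩ {ω | ∀ i ≤ j + 1, ξ i ω = (fun i => if h : i < j + 2 then c ⟨i, h⟩ else 0) i}) := by
    intro ω hω
    refine Set.mem_iUnion.mpr ⟨fun i => ξ i ω, hω, fun i hi => ?_⟩
    have hi2 : i < j + 2 := by omega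
    simp [hi2]
  refine measure_mono_null hcover (measure_iUnion_null fun c => ?_)
  set kk : ℕ → ℤ := fun i => if h : i < j + 2 then c ⟨i, h⟩ else 0 with hkk
  by_cases hgood : kk (j + 1) = kk j + 1 ∨ kk (j + 1) = kk j - 1
  · have hempty : E ∩ {ω | ∀ i ≤ j + 1, ξ i ω = kk i} = ∅ := by
      ext ω
      simp only [Set.mem_inter_iff, Set.mem_empty_iff_false, iff_false, not_and]
      intro hEω hcyl
      have h1 := hcyl j (by omega)
      have h2 := hcyl (j + 1) le_rfl
      apply hEω
      rw [h1, h2]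
      exact hgood
    rw [hempty]
    exact measure_empty
  · refine measure_mono_null Set.inter_subset_right ?_
    rw [hw.2.2 (j + 1) kk]
    push_neg at hgood
    have hstep0 : stepProb 𝔭 α x (kk j) (kk (j + 1)) = 0 := by
      simp [stepProb, hgood.1, hgood.2]
    have hprod : ∏ i ∈ Finset.range (j + 1), stepProb 𝔭 α x (kk i) (kk (i + 1)) = 0 :=
      Finset.prod_eq_zero (Finset.mem_range.mpr (by omega)) hstep0
    rw [hprod, mul_zero, ENNReal.ofReal_zero]

/-- Almost surely the walk starts at 0 and has ±1 steps. -/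
lemma null_bad (hw : IsQPWalk 𝔭 α x 0 ℙ ξ) :
    ℙ {ω | ¬(ξ 0 ω = 0 ∧ ∀ j, ξ (j + 1) ω = ξ j ω + 1 ∨ ξ (j + 1) ω = ξ j ω - 1)} = 0 := by
  have hsub : {ω | ¬(ξ 0 ω = 0 ∧ ∀ j, ξ (j + 1) ω = ξ j ω + 1 ∨ ξ (j + 1) ω = ξ j ω - 1)} ⊆
      {ω | ξ 0 ω ≠ 0} ∪
        ⋃ j : ℕ, {ω | ¬(ξ (j + 1) ω = ξ j ω + 1 ∨ ξ (j + 1) ω = ξ j ω - 1)} := by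
    intro ω hω
    by_cases h0 : ξ 0 ω = 0
    · right
      have hB : ¬∀ j, ξ (j + 1) ω = ξ j ω + 1 ∨ ξ (j + 1) ω = ξ j ω - 1 :=
        fun hb => hω ⟨h0, hb⟩
      push_neg at hB
      obtain ⟨j, hj⟩ := hB
      exact Set.mem_iUnion.mpr ⟨j, by simpa using hj⟩
    · exact Or.inl h0
  exact measure_mono_null hsub
    (measure_union_null (null_start hw) (measure_iUnion_null fun j => null_badstep hw j))

/-- Deterministic path lemma: if a ±1 walk started at 0 is in `I_k` at time `n` but
never visited `I_k` up to time `N`, then at some time `m ∈ (N, n]` the walk is at a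
running max or a running min. -/
lemma key_exists (q : ℕ) (hq : 2 ≤ q) (N : ℕ) (n : ℕ) (k : ℤ) (f : ℕ → ℤ)
    (h0 : f 0 = 0) (hstep : ∀ j, f (j + 1) = f j + 1 ∨ f (j + 1) = f j - 1)
    (hτ : ∀ j ≤ N, ¬((q : ℤ) * k ≤ f j ∧ f j < (q : ℤ) * (k + 1)))
    (hmem : (q : ℤ) * k ≤ f n ∧ f n < (q : ℤ) * (k + 1)) :
    ∃ m, N < m ∧ m ≤ n ∧ ((∀ j ≤ m, f j ≤ f m) ∨ (∀ j ≤ m, f m ≤ f j)) := by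
  have hq1 : (1 : ℤ) ≤ (q : ℤ) := by exact_mod_cast Nat.one_le_of_lt hq
  have hqq : (q : ℤ) * (k + 1) = (q : ℤ) * k + (q : ℤ) := by ring
  simp only [hqq] at hτ hmem
  obtain ⟨a, ha⟩ : ∃ a : ℤ, (q : ℤ) * k = a := ⟨_, rfl⟩
  rw [ha] at hqq
  simp only [ha] at hτ hmem
  rcases lt_trichotomy k 0 with hk | hk | hk
  · -- k < 0 : walk stays ≥ q(k+1) up to time N, enters from above afterwards: running min
    have hk1 : k + 1 ≤ 0 := by omega
    have h1 : (q : ℤ) * (k + 1) ≤ 0 := by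
      have := mul_le_mul_of_nonneg_left hk1 (show (0 : ℤ) ≤ (q : ℤ) by linarith)
      simpa using this
    have haq : a + (q : ℤ) ≤ 0 := by linarith [hqq]
    have hlow : ∀ j, j ≤ N → a + (q : ℤ) ≤ f j := by
      intro j
      induction j with
      | zero => intro _; omega
      | succ j ih =>
        intro hj
        have h1 := ih (by omega)
        have h2 := hτ (j + 1) hj
        rcases hstep j with h | h <;> omega
    have hex : ∃ m, f m < a + (q : ℤ) := ⟨n, hmem.2⟩
    refine ⟨Nat.find hex, ?_, Nat.find_le hmem.2, Or.inr fun j hj => ?_⟩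
    · by_contra hc
      push_neg at hc
      have := hlow _ hc
      have hs := Nat.find_spec hex
      omega
    · rcases eq_or_lt_of_le hj with h | h
      · rw [h]
      · have h1 := Nat.find_min hex h
        have h2 := Nat.find_spec hex
        omega
  · -- k = 0 impossible: the walk starts in I_0
    exfalso
    have h2 := hτ 0 (Nat.zero_le N)
    rw [hk] at ha
    simp only [mul_zero] at ha
    omega
  · -- k > 0 : walk stays < qk up to time N, enters from below afterwards: running max
    have h1 : (q : ℤ) * 1 ≤ (q : ℤ) * k :=
      mul_le_mul_of_nonneg_left (by omega) (by linarith)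
    have haq : (q : ℤ) ≤ a := by
      rw [← ha]; linarith
    have hhigh : ∀ j, j ≤ N → f j < a := by
      intro j
      induction j with
      | zero => intro _; omega
      | succ j ih =>
        intro hj
        have h1 := ih (by omega)
        have h2 := hτ (j + 1) hj
        rcases hstep j with h | h <;> omega
    have hex : ∃ m, a ≤ f m := ⟨n, hmem.1⟩
    refine ⟨Nat.find hex, ?_, Nat.find_le hmem.1, Or.inl fun j hj => ?_⟩
    · by_contra hc
      push_neg at hc
      have := hhigh _ hc
      have hs := Nat.find_spec hex
      omega
    · rcases eq_or_lt_of_le hj with h | h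
      · rw [h]
      · have h1 := Nat.find_min hex h
        have h2 := Nat.find_spec hex
        omega

end Aux

/-- Lemma 4.1: fix `q ≥ 2` and `n₀ ≥ 0`, let `I_k = [qk, q(k+1))`
and let `τ_k` be the first visit time of `(ξ_n)` to `I_k`. If the triple `(𝔭, α, x)`
satisfies condition (1.6), then `Σ_{k∈ℤ} ℙ_x(τ_k > n - n₀, ξ_n ∈ I_k) → 0` as
`n → ∞`. (Here `τ_k > n - n₀` means that `(ξ_j)` does not visit `I_k` up to time
`n - n₀`.) -/
theorem statement13 (α : ℝ) (hα : Irrational α) (𝔣 : UnitAddCircle → ℝ)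
    (h𝔣 : ZeroMeanBV 𝔣) (q : ℕ) (hq : 2 ≤ q) (n₀ : ℕ)
    (x : UnitAddCircle) (Ω : Type) [MeasurableSpace Ω] (ℙ : Measure Ω)
    (ξ : ℕ → Ω → ℤ) (hw : IsQPWalk (pOf 𝔣) α x 0 ℙ ξ)
    (hcond : MaxMinCond ℙ ξ) :
    Tendsto (fun n : ℕ => ∑' k : ℤ,
        (ℙ {ω | (∀ j ≤ n - n₀,
            ¬((q : ℤ) * k ≤ ξ j ω ∧ ξ j ω < (q : ℤ) * (k + 1))) ∧
          (q : ℤ) * k ≤ ξ n ω ∧ ξ n ω < (q : ℤ) * (k + 1)}).toReal)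
      atTop (nhds 0) := by
  haveI := hw.1
  set MxS : ℕ → Set Ω := fun m => {ω | ∀ j ≤ m, ξ j ω ≤ ξ m ω} with hMxS
  set MnS : ℕ → Set Ω := fun m => {ω | ∀ j ≤ m, ξ m ω ≤ ξ j ω} with hMnS
  set A : ℕ → ℤ → Set Ω := fun n k =>
    {ω | (∀ j ≤ n - n₀,
        ¬((q : ℤ) * k ≤ ξ j ω ∧ ξ j ω < (q : ℤ) * (k + 1))) ∧
      (q : ℤ) * k ≤ ξ n ω ∧ ξ n ω < (q : ℤ) * (k + 1)} with hAdef
  set g : ℕ → ℝ := fun m => (ℙ (MxS m)).toReal + (ℙ (MnS m)).toReal with hgdef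
  have hgnn : ∀ m, 0 ≤ g m := fun m => add_nonneg ENNReal.toReal_nonneg ENNReal.toReal_nonneg
  have hg0 : Tendsto g atTop (nhds 0) := by
    have := hcond.1.add hcond.2
    simpa using this
  have hbound : ∀ n : ℕ,
      (∑' k : ℤ, (ℙ (A n k)).toReal) ≤ ∑ i ∈ Finset.range n₀, g (n - i) := by
    intro n
    have hmeasA : ∀ k : ℤ, MeasurableSet (A n k) := by
      intro k
      have hbase : ∀ (j : ℕ) (S : Set ℤ), MeasurableSet {ω | ξ j ω ∈ S} :=
        fun j S => hw.2.1 j (S.to_countable.measurableSet)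
      have h1 : MeasurableSet
          {ω | ∀ j ≤ n - n₀, ¬((q : ℤ) * k ≤ ξ j ω ∧ ξ j ω < (q : ℤ) * (k + 1))} := by
        have he : {ω | ∀ j ≤ n - n₀, ¬((q : ℤ) * k ≤ ξ j ω ∧ ξ j ω < (q : ℤ) * (k + 1))}
            = ⋂ (j : ℕ) (_ : j ≤ n - n₀),
                {ω | ξ j ω ∈ {z : ℤ | ¬((q : ℤ) * k ≤ z ∧ z < (q : ℤ) * (k + 1))}} := by
          ext ω
          simp [Set.mem_iInter]
        rw [he]
        exact MeasurableSet.iInter fun j => MeasurableSet.iInter fun _ => hbase j _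
      exact h1.inter (hbase n {z : ℤ | (q : ℤ) * k ≤ z ∧ z < (q : ℤ) * (k + 1)})
    have hq0 : (0 : ℤ) < (q : ℤ) := by exact_mod_cast Nat.lt_of_lt_of_le Nat.zero_lt_two hq
    have hdisj : Pairwise (Function.onFun Disjoint (A n)) := by
      intro k k' hkk'
      rw [Function.onFun, Set.disjoint_left]
      intro ω h1 h2
      apply hkk'
      have e1 := h1.2
      have e2 := h2.2
      have h3 : k < k' + 1 :=
        lt_of_mul_lt_mul_left
          (show (q : ℤ) * k < (q : ℤ) * (k' + 1) by linarith [e1.1, e1.2, e2.1, e2.2])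
          (by linarith)
      have h4 : k' < k + 1 :=
        lt_of_mul_lt_mul_left
          (show (q : ℤ) * k' < (q : ℤ) * (k + 1) by linarith [e1.1, e1.2, e2.1, e2.2])
          (by linarith)
      omega
    have h1 : ∑' k : ℤ, ℙ (A n k) = ℙ (⋃ k : ℤ, A n k) := (measure_iUnion hdisj hmeasA).symm
    have hsub : (⋃ k : ℤ, A n k) ⊆
        {ω | ¬(ξ 0 ω = 0 ∧ ∀ j, ξ (j + 1) ω = ξ j ω + 1 ∨ ξ (j + 1) ω = ξ j ω - 1)} ∪
          ⋃ m ∈ Finset.Ioc (n - n₀) n, (MxS m ∪ MnS m) := by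
      intro ω hω
      obtain ⟨k, hk⟩ := Set.mem_iUnion.mp hω
      by_cases hgood : ξ 0 ω = 0 ∧ ∀ j, ξ (j + 1) ω = ξ j ω + 1 ∨ ξ (j + 1) ω = ξ j ω - 1
      · right
        obtain ⟨m, hm1, hm2, hm3⟩ :=
          key_exists q hq (n - n₀) n k (fun j => ξ j ω) hgood.1 hgood.2 hk.1 hk.2
        refine Set.mem_biUnion (Finset.mem_coe.mpr (Finset.mem_Ioc.mpr ⟨hm1, hm2⟩)) ?_
        rcases hm3 with h | h
        · exact Or.inl h
        · exact Or.inr h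
      · exact Or.inl hgood
    have h2 : ℙ (⋃ k : ℤ, A n k) ≤
        ∑ m ∈ Finset.Ioc (n - n₀) n, (ℙ (MxS m) + ℙ (MnS m)) := by
      calc ℙ (⋃ k : ℤ, A n k)
          ≤ ℙ ({ω | ¬(ξ 0 ω = 0 ∧ ∀ j, ξ (j + 1) ω = ξ j ω + 1 ∨ ξ (j + 1) ω = ξ j ω - 1)} ∪
              ⋃ m ∈ Finset.Ioc (n - n₀) n, (MxS m ∪ MnS m)) := measure_mono hsub
        _ ≤ ℙ {ω | ¬(ξ 0 ω = 0 ∧ ∀ j, ξ (j + 1) ω = ξ j ω + 1 ∨ ξ (j + 1) ω = ξ j ω - 1)} +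
              ℙ (⋃ m ∈ Finset.Ioc (n - n₀) n, (MxS m ∪ MnS m)) := measure_union_le _ _
        _ = ℙ (⋃ m ∈ Finset.Ioc (n - n₀) n, (MxS m ∪ MnS m)) := by
              rw [null_bad hw, zero_add]
        _ ≤ ∑ m ∈ Finset.Ioc (n - n₀) n, ℙ (MxS m ∪ MnS m) :=
              measure_biUnion_finset_le _ _
        _ ≤ ∑ m ∈ Finset.Ioc (n - n₀) n, (ℙ (MxS m) + ℙ (MnS m)) :=
              Finset.sum_le_sum fun m _ => measure_union_le _ _
    have hne : ∀ k : ℤ, ℙ (A n k) ≠ ⊤ := fun k => measure_ne_top ℙ _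
    have hRne : (∑ m ∈ Finset.Ioc (n - n₀) n, (ℙ (MxS m) + ℙ (MnS m))) ≠ ⊤ := by
      refine (ENNReal.sum_lt_top.mpr fun m _ => ?_).ne
      exact ENNReal.add_lt_top.mpr ⟨measure_lt_top ℙ _, measure_lt_top ℙ _⟩
    have hreindex : ∑ m ∈ Finset.Ioc (n - n₀) n, g m ≤ ∑ i ∈ Finset.range n₀, g (n - i) := by
      have hinj : ∀ x₁ ∈ Finset.Ioc (n - n₀) n, ∀ x₂ ∈ Finset.Ioc (n - n₀) n,
          n - x₁ = n - x₂ → x₁ = x₂ := by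
        intro x₁ hx₁ x₂ hx₂ hx
        simp only [Finset.mem_Ioc] at hx₁ hx₂
        omega
      have hstep1 : ∑ i ∈ (Finset.Ioc (n - n₀) n).image (fun m => n - m), g (n - i)
          = ∑ m ∈ Finset.Ioc (n - n₀) n, g (n - (n - m)) := Finset.sum_image hinj
      have hstep2 : ∑ m ∈ Finset.Ioc (n - n₀) n, g (n - (n - m))
          = ∑ m ∈ Finset.Ioc (n - n₀) n, g m := by
        refine Finset.sum_congr rfl fun m hm => ?_
        simp only [Finset.mem_Ioc] at hm
        congr 1
        omega
      rw [← hstep2, ← hstep1]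
      refine Finset.sum_le_sum_of_subset_of_nonneg ?_ (fun i _ _ => hgnn _)
      intro i hi
      simp only [Finset.mem_image, Finset.mem_Ioc] at hi
      obtain ⟨m, ⟨hm1, hm2⟩, rfl⟩ := hi
      exact Finset.mem_range.mpr (by omega)
    calc (∑' k : ℤ, (ℙ (A n k)).toReal)
        = (∑' k : ℤ, ℙ (A n k)).toReal := (ENNReal.tsum_toReal_eq hne).symm
      _ = (ℙ (⋃ k : ℤ, A n k)).toReal := by rw [h1]
      _ ≤ (∑ m ∈ Finset.Ioc (n - n₀) n, (ℙ (MxS m) + ℙ (MnS m))).toReal :=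
          ENNReal.toReal_mono hRne h2
      _ = ∑ m ∈ Finset.Ioc (n - n₀) n, ((ℙ (MxS m)).toReal + (ℙ (MnS m)).toReal) := by
          rw [ENNReal.toReal_sum (fun m _ => ENNReal.add_ne_top.mpr
            ⟨measure_ne_top ℙ _, measure_ne_top ℙ _⟩)]
          exact Finset.sum_congr rfl fun m _ =>
            ENNReal.toReal_add (measure_ne_top ℙ _) (measure_ne_top ℙ _)
      _ = ∑ m ∈ Finset.Ioc (n - n₀) n, g m := rfl
      _ ≤ ∑ i ∈ Finset.range n₀, g (n - i) := hreindex
  have hlim : Tendsto (fun n => ∑ i ∈ Finset.range n₀, g (n - i)) atTop (nhds 0) := by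
    have h := tendsto_finset_sum (Finset.range n₀)
      (fun i (_ : i ∈ Finset.range n₀) => hg0.comp (tendsto_sub_atTop_nat i))
    simpa using h
  exact squeeze_zero (fun n => tsum_nonneg fun k => ENNReal.toReal_nonneg) hbound hlim
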